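/- In the noisy-max mechanism with m = 2 classes and counts n₁ > n₂, the probability that the output is not class 1 is at most (2 + γ(n₁ − n₂)) e^{-γ(n₁−n₂)}/4, and this bound is tight (achieved with equality). -/

import Mathlib

/-!
With `t = n₁ - n₂`, the event is `t + L₁ ≤ L₂`, so by independence its probability is
`∫ S(t + x) dμ(x)`, where `μ` is the Laplace law and `S(a) = μ [a, ∞)` equals `e^{-γa}/2` for
`a ≥ 0` and `1 - e^{γa}/2` for `a ≤ 0`. Splitting the line at `-t` and `0`, the integrand is
elementary on each piece, and the three pieces contribute `3/8 e^{-γt}`, `γt/4 e^{-γt}` and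
`1/8 e^{-γt}`.
-/

open MeasureTheory ProbabilityTheory Real Set

noncomputable def laplacePDFReal (γ x : ℝ) : ℝ := γ / 2 * exp (-γ * |x|)

noncomputable def laplaceMeasure (γ : ℝ) : Measure ℝ :=
  volume.withDensity fun x => ENNReal.ofReal (laplacePDFReal γ x)

lemma measure_add_le_eq_lintegral_map {Ω : Type*} [MeasurableSpace Ω] {P : Measure Ω}
    [IsFiniteMeasure P] {X Y : Ω → ℝ} (hX : Measurable X) (hY : Measurable Y)
    (hXY : IndepFun X Y P) (t : ℝ) :
    P {ω | t + X ω ≤ Y ω} = ∫⁻ x, P.map Y (Ici (t + x)) ∂P.map X := by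
  have hS : MeasurableSet {p : ℝ × ℝ | t + p.1 ≤ p.2} :=
    measurableSet_le (measurable_const.add measurable_fst) measurable_snd
  change P ((fun ω => (X ω, Y ω)) ⁻¹' {p | t + p.1 ≤ p.2}) = _
  rw [← Measure.map_apply (hX.prodMk hY) hS,
    (indepFun_iff_map_prod_eq_prod_map_map hX.aemeasurable hY.aemeasurable).1 hXY,
    Measure.prod_apply hS]
  rfl

lemma measurable_measureReal_Ici_add (μ : Measure ℝ) [IsFiniteMeasure μ] (t : ℝ) :
    Measurable fun x => μ.real (Ici (t + x)) :=
  Antitone.measurable fun _ _ hxy => measureReal_mono (Ici_subset_Ici.2 (by linarith))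

section Laplace

variable {γ : ℝ}

lemma laplacePDFReal_of_nonpos {x : ℝ} (hx : x ≤ 0) :
    laplacePDFReal γ x = γ / 2 * exp (γ * x) := by
  rw [laplacePDFReal, abs_of_nonpos hx, neg_mul_neg]

lemma laplacePDFReal_of_nonneg {x : ℝ} (hx : 0 ≤ x) :
    laplacePDFReal γ x = γ / 2 * exp (-γ * x) := by
  rw [laplacePDFReal, abs_of_nonneg hx]

lemma laplacePDFReal_nonneg (hγ : 0 < γ) (x : ℝ) : 0 ≤ laplacePDFReal γ x := by
  unfold laplacePDFReal; positivity

lemma integrable_laplacePDFReal (hγ : 0 < γ) : Integrable (laplacePDFReal γ) := by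
  rw [← integrableOn_univ, ← Iic_union_Ioi (a := 0), integrableOn_union]
  constructor
  · exact IntegrableOn.congr_fun ((integrableOn_exp_mul_Iic hγ 0).const_mul (γ / 2))
      (fun x hx => (laplacePDFReal_of_nonpos hx).symm) measurableSet_Iic
  · exact IntegrableOn.congr_fun ((integrableOn_exp_mul_Ioi (neg_lt_zero.2 hγ) 0).const_mul _)
      (fun x hx => (laplacePDFReal_of_nonneg hx.le).symm) measurableSet_Ioi

lemma integral_laplacePDFReal (hγ : 0 < γ) : ∫ x, laplacePDFReal γ x = 1 := by
  simp only [laplacePDFReal]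
  rw [integral_comp_abs (f := fun y => γ / 2 * exp (-γ * y)), integral_const_mul,
    integral_exp_mul_Ioi (neg_lt_zero.2 hγ), mul_zero, exp_zero]
  field_simp

lemma laplaceMeasure_apply (hγ : 0 < γ) {s : Set ℝ} (hs : MeasurableSet s) :
    laplaceMeasure γ s = ENNReal.ofReal (∫ x in s, laplacePDFReal γ x) := by
  rw [laplaceMeasure, withDensity_apply _ hs,
    ofReal_integral_eq_lintegral_ofReal (integrable_laplacePDFReal hγ).integrableOn
      (Filter.Eventually.of_forall (laplacePDFReal_nonneg hγ))]

lemma laplaceMeasure_real_apply (hγ : 0 < γ) {s : Set ℝ} (hs : MeasurableSet s) :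
    (laplaceMeasure γ).real s = ∫ x in s, laplacePDFReal γ x := by
  rw [measureReal_def, laplaceMeasure_apply hγ hs,
    ENNReal.toReal_ofReal (integral_nonneg (laplacePDFReal_nonneg hγ))]

lemma isProbabilityMeasure_laplaceMeasure (hγ : 0 < γ) :
    IsProbabilityMeasure (laplaceMeasure γ) :=
  ⟨by rw [laplaceMeasure_apply hγ MeasurableSet.univ, Measure.restrict_univ,
    integral_laplacePDFReal hγ, ENNReal.ofReal_one]⟩

lemma laplaceMeasure_real_Ici_of_nonneg (hγ : 0 < γ) {a : ℝ} (ha : 0 ≤ a) :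
    (laplaceMeasure γ).real (Ici a) = exp (-γ * a) / 2 := by
  rw [laplaceMeasure_real_apply hγ measurableSet_Ici, integral_Ici_eq_integral_Ioi,
    setIntegral_congr_fun measurableSet_Ioi
      (fun x hx => laplacePDFReal_of_nonneg (ha.trans (le_of_lt hx))),
    integral_const_mul, integral_exp_mul_Ioi (neg_lt_zero.2 hγ)]
  field_simp

lemma laplaceMeasure_real_Ici_of_nonpos (hγ : 0 < γ) {a : ℝ} (ha : a ≤ 0) :
    (laplaceMeasure γ).real (Ici a) = 1 - exp (γ * a) / 2 := by
  have := isProbabilityMeasure_laplaceMeasure hγ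
  rw [← compl_Iio, probReal_compl_eq_one_sub measurableSet_Iio,
    laplaceMeasure_real_apply hγ measurableSet_Iio, ← integral_Iic_eq_integral_Iio,
    setIntegral_congr_fun measurableSet_Iic
      (fun x hx => laplacePDFReal_of_nonpos (le_trans hx ha)),
    integral_const_mul, integral_exp_mul_Iic hγ]
  field_simp

lemma setIntegral_Iic_laplacePDFReal_mul_Ici_add (hγ : 0 < γ) {t : ℝ} (ht : 0 ≤ t) :
    ∫ x in Iic (-t), laplacePDFReal γ x * (laplaceMeasure γ).real (Ici (t + x)) =
      3 / 8 * exp (-γ * t) := by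
  have h2γ : 0 < 2 * γ := by positivity
  have hpt : EqOn (fun x => laplacePDFReal γ x * (laplaceMeasure γ).real (Ici (t + x)))
      (fun x => γ / 2 * exp (γ * x) - γ / 4 * exp (γ * t) * exp (2 * γ * x)) (Iic (-t)) := by
    intro x (hx : x ≤ -t)
    have hexp : exp (γ * x) * exp (γ * (t + x)) = exp (γ * t) * exp (2 * γ * x) := by
      rw [← exp_add, ← exp_add]; ring_nf
    simp only [laplacePDFReal_of_nonpos (show x ≤ 0 by linarith),
      laplaceMeasure_real_Ici_of_nonpos hγ (show t + x ≤ 0 by linarith)]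
    linear_combination (-γ / 4) * hexp
  rw [setIntegral_congr_fun measurableSet_Iic hpt,
    integral_sub ((integrableOn_exp_mul_Iic hγ _).const_mul _)
      ((integrableOn_exp_mul_Iic h2γ _).const_mul _),
    integral_const_mul, integral_const_mul, integral_exp_mul_Iic hγ, integral_exp_mul_Iic h2γ,
    mul_neg, ← neg_mul]
  field_simp
  rw [← exp_add]
  ring_nf

lemma intervalIntegral_laplacePDFReal_mul_Ici_add (hγ : 0 < γ) {t : ℝ} (ht : 0 ≤ t) :
    ∫ x in -t..0, laplacePDFReal γ x * (laplaceMeasure γ).real (Ici (t + x)) =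
      t * (γ / 4 * exp (-γ * t)) := by
  have hpt : EqOn (fun x => laplacePDFReal γ x * (laplaceMeasure γ).real (Ici (t + x)))
      (fun _ => γ / 4 * exp (-γ * t)) (uIcc (-t) 0) := by
    intro x hx
    rw [uIcc_of_le (by linarith)] at hx
    have hexp : exp (γ * x) * exp (-γ * (t + x)) = exp (-γ * t) := by
      rw [← exp_add]; ring_nf
    simp only [laplacePDFReal_of_nonpos hx.2,
      laplaceMeasure_real_Ici_of_nonneg hγ (show 0 ≤ t + x by linarith [hx.1])]
    linear_combination (γ / 4) * hexp
  rw [intervalIntegral.integral_congr hpt, intervalIntegral.integral_const, smul_eq_mul]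
  ring

lemma setIntegral_Ioi_laplacePDFReal_mul_Ici_add (hγ : 0 < γ) {t : ℝ} (ht : 0 ≤ t) :
    ∫ x in Ioi 0, laplacePDFReal γ x * (laplaceMeasure γ).real (Ici (t + x)) =
      exp (-γ * t) / 8 := by
  have hpt : EqOn (fun x => laplacePDFReal γ x * (laplaceMeasure γ).real (Ici (t + x)))
      (fun x => γ / 4 * exp (-γ * t) * exp (-(2 * γ) * x)) (Ioi 0) := by
    intro x (hx : 0 < x)
    have hexp : exp (-γ * x) * exp (-γ * (t + x)) = exp (-γ * t) * exp (-(2 * γ) * x) := by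
      rw [← exp_add, ← exp_add]; ring_nf
    simp only [laplacePDFReal_of_nonneg hx.le,
      laplaceMeasure_real_Ici_of_nonneg hγ (show 0 ≤ t + x by linarith)]
    linear_combination (γ / 4) * hexp
  rw [setIntegral_congr_fun measurableSet_Ioi hpt, integral_const_mul,
    integral_exp_mul_Ioi (by linarith), mul_zero, exp_zero]
  field_simp
  ring

lemma integrable_laplacePDFReal_mul_Ici_add (hγ : 0 < γ) (t : ℝ) :
    Integrable fun x => laplacePDFReal γ x * (laplaceMeasure γ).real (Ici (t + x)) :=
  have := isProbabilityMeasure_laplaceMeasure hγ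
  (integrable_laplacePDFReal hγ).mul_bdd
    (measurable_measureReal_Ici_add _ t).aestronglyMeasurable
    (Filter.Eventually.of_forall fun _ => by
      rw [Real.norm_of_nonneg measureReal_nonneg]; exact measureReal_le_one)

lemma lintegral_laplaceMeasure_Ici_add (hγ : 0 < γ) (t : ℝ) :
    ∫⁻ x, laplaceMeasure γ (Ici (t + x)) ∂laplaceMeasure γ =
      ENNReal.ofReal (∫ x, laplacePDFReal γ x * (laplaceMeasure γ).real (Ici (t + x))) := by
  have := isProbabilityMeasure_laplaceMeasure hγ
  calc ∫⁻ x, laplaceMeasure γ (Ici (t + x)) ∂laplaceMeasure γ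
      = ∫⁻ x, ENNReal.ofReal ((laplaceMeasure γ).real (Ici (t + x))) ∂laplaceMeasure γ :=
        lintegral_congr fun x => (ofReal_measureReal).symm
    _ = ∫⁻ x, ENNReal.ofReal (laplacePDFReal γ x) *
          ENNReal.ofReal ((laplaceMeasure γ).real (Ici (t + x))) :=
        lintegral_withDensity_eq_lintegral_mul _ (by unfold laplacePDFReal; fun_prop)
          (measurable_measureReal_Ici_add _ t).ennreal_ofReal
    _ = ENNReal.ofReal (∫ x, laplacePDFReal γ x * (laplaceMeasure γ).real (Ici (t + x))) := by
        rw [ofReal_integral_eq_lintegral_ofReal (integrable_laplacePDFReal_mul_Ici_add hγ t)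
          (Filter.Eventually.of_forall fun x =>
            mul_nonneg (laplacePDFReal_nonneg hγ x) measureReal_nonneg)]
        simp only [ENNReal.ofReal_mul (laplacePDFReal_nonneg hγ _)]

lemma integral_laplacePDFReal_mul_Ici_add (hγ : 0 < γ) {t : ℝ} (ht : 0 ≤ t) :
    ∫ x, laplacePDFReal γ x * (laplaceMeasure γ).real (Ici (t + x)) =
      (2 + γ * t) * exp (-γ * t) / 4 := by
  have hint := integrable_laplacePDFReal_mul_Ici_add hγ t
  rw [← intervalIntegral.integral_Iic_add_Ioi hint.integrableOn hint.integrableOn,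
    ← intervalIntegral.integral_interval_add_Ioi hint.integrableOn hint.integrableOn,
    setIntegral_Iic_laplacePDFReal_mul_Ici_add hγ ht,
    intervalIntegral_laplacePDFReal_mul_Ici_add hγ ht,
    setIntegral_Ioi_laplacePDFReal_mul_Ici_add hγ ht]
  ring

end Laplace

/-- Noisy max with two classes and counts `n₁ > n₂`: the probability that the output is
not class 1 equals `(2 + γ(n₁ - n₂)) e^{-γ(n₁-n₂)} / 4` (the bound of
Lemma `bound_on_q` holds with equality, i.e. it is tight). -/
theorem noisy_max_two_classes_tight
    {Ω : Type*} [MeasureSpace Ω] [IsProbabilityMeasure (ℙ : Measure Ω)]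
    (γ : ℝ) (hγ : 0 < γ) (n₁ n₂ : ℤ) (hn : n₂ < n₁)
    (L₁ L₂ : Ω → ℝ) (hL₁ : Measurable L₁) (hL₂ : Measurable L₂)
    (hindep : IndepFun L₁ L₂ ℙ)
    (hpdf : ∀ X ∈ [L₁, L₂], Measure.map X ℙ =
      volume.withDensity (fun x => ENNReal.ofReal (γ / 2 * Real.exp (-γ * |x|)))) :
    ℙ {ω | (n₁ : ℝ) + L₁ ω ≤ (n₂ : ℝ) + L₂ ω} =
      ENNReal.ofReal ((2 + γ * ((n₁ : ℝ) - (n₂ : ℝ))) *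
        Real.exp (-γ * ((n₁ : ℝ) - (n₂ : ℝ))) / 4) := by
  set t : ℝ := (n₁ : ℝ) - n₂
  have ht : 0 ≤ t := sub_nonneg.2 (by exact_mod_cast hn.le)
  have hlaw₁ : Measure.map L₁ ℙ = laplaceMeasure γ := hpdf L₁ (by simp)
  have hlaw₂ : Measure.map L₂ ℙ = laplaceMeasure γ := hpdf L₂ (by simp)
  have hevent : {ω | (n₁ : ℝ) + L₁ ω ≤ n₂ + L₂ ω} = {ω | t + L₁ ω ≤ L₂ ω} := by
    ext ω
    change (n₁ : ℝ) + L₁ ω ≤ n₂ + L₂ ω ↔ t + L₁ ω ≤ L₂ ω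
    constructor <;> intro h <;> linarith
  rw [hevent, measure_add_le_eq_lintegral_map hL₁ hL₂ hindep, hlaw₁, hlaw₂,
    lintegral_laplaceMeasure_Ici_add hγ, integral_laplacePDFReal_mul_Ici_add hγ ht]
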